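/- Let A, B ∈ ℝ^{m₁×m₂} and let P_A(B) denote the projection of B defined by P_A(B) = B − P_{S_U^⊥(A)} B P_{S_V^⊥(A)}, where S_U(A), S_V(A) are the column spans of left and right singular vectors of A. Then rank(P_A(B)) ≤ 2·rank(A), and consequently ‖P_A(B)‖_* ≤ √(2·rank(A)) · ‖P_A(B)‖_F ≤ √(2·rank(A)) · ‖B‖_F. -/

import Mathlib

open Matrix

open scoped MatrixOrder in
/-- The singular values of a rectangular real matrix A, as the eigenvalues of
the positive semidefinite square root of AᵀA. -/
noncomputable def singVals {m₁ m₂ : ℕ} (A : Matrix (Fin m₁) (Fin m₂) ℝ) : Fin m₂ → ℝ :=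
  (CFC.sqrt_nonneg (Aᴴ * A)).posSemidef.1.eigenvalues

/-- The nuclear norm: sum of the singular values. -/
noncomputable def nuclearNorm {m₁ m₂ : ℕ} (A : Matrix (Fin m₁) (Fin m₂) ℝ) : ℝ :=
  ∑ j, singVals A j

/-- The Frobenius norm. -/
noncomputable def frobNorm {m₁ m₂ : ℕ} (A : Matrix (Fin m₁) (Fin m₂) ℝ) : ℝ :=
  Real.sqrt (∑ k, ∑ l, (A k l) ^ 2)

/-- Sum of squared entries as a trace. -/
lemma trace_transpose_mul_self {m₁ m₂ : ℕ} (M : Matrix (Fin m₁) (Fin m₂) ℝ) :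
    (Mᵀ * M).trace = ∑ k, ∑ l, (M k l) ^ 2 := by
  rw [Finset.sum_comm]
  simp [Matrix.trace, Matrix.mul_apply, Matrix.diag, sq]

lemma trace_transpose_mul_self_nonneg {m₁ m₂ : ℕ} (M : Matrix (Fin m₁) (Fin m₂) ℝ) :
    0 ≤ (Mᵀ * M).trace := by
  rw [trace_transpose_mul_self]
  exact Finset.sum_nonneg fun _ _ => Finset.sum_nonneg fun _ _ => sq_nonneg _

lemma frobNorm_eq_sqrt_trace {m₁ m₂ : ℕ} (M : Matrix (Fin m₁) (Fin m₂) ℝ) :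
    frobNorm M = Real.sqrt ((Mᵀ * M).trace) := by
  rw [frobNorm, trace_transpose_mul_self]

/-- Sum of squared eigenvalues of a Hermitian real matrix equals trace of its square. -/
lemma sum_sq_eigenvalues {n : ℕ} (S : Matrix (Fin n) (Fin n) ℝ) (hS : S.IsHermitian) :
    ∑ i, hS.eigenvalues i ^ 2 = (S * S).trace := by
  set U := (hS.eigenvectorUnitary : Matrix (Fin n) (Fin n) ℝ) with hUdef
  set D := Matrix.diagonal ((RCLike.ofReal ∘ hS.eigenvalues : Fin n → ℝ)) with hDdef
  have hU : star U * U = 1 := (Matrix.mem_unitaryGroup_iff').mp hS.eigenvectorUnitary.2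
  have hcancel : ∀ X : Matrix (Fin n) (Fin n) ℝ, star U * (U * X) = X := by
    intro X; rw [← Matrix.mul_assoc, hU, Matrix.one_mul]
  have hSS : S * S = U * (D * D) * star U := by
    conv_lhs => rw [hS.spectral_theorem]
    simp only [Unitary.conjStarAlgAut_apply, ← hDdef, ← hUdef, Matrix.mul_assoc, hcancel]
  rw [hSS, Matrix.mul_assoc, Matrix.trace_mul_comm, Matrix.mul_assoc, hU, Matrix.mul_one]
  simp [hDdef, Matrix.diagonal_mul_diagonal, Matrix.trace_diagonal, sq,
    RCLike.ofReal_real_eq_id]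

open scoped MatrixOrder in
/-- Nuclear norm is at most √(rank) times the Frobenius norm. -/
lemma nuclearNorm_le_sqrt_rank_mul_frobNorm {m₁ m₂ : ℕ} (A : Matrix (Fin m₁) (Fin m₂) ℝ) :
    nuclearNorm A ≤ Real.sqrt A.rank * frobNorm A := by
  classical
  set hG := Matrix.posSemidef_conjTranspose_mul_self A with hGdef
  set S := CFC.sqrt (Aᴴ * A) with hSdef
  set lam := singVals A with hlamdef
  have hlam_nonneg : ∀ i, 0 ≤ lam i := fun i => (CFC.sqrt_nonneg (Aᴴ * A)).posSemidef.eigenvalues_nonneg i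
  have hlam_sq : ∑ i, lam i ^ 2 = ∑ k, ∑ l, (A k l) ^ 2 := by
    have h1 : ∑ i, lam i ^ 2 = (S * S).trace :=
      sum_sq_eigenvalues S (CFC.sqrt_nonneg (Aᴴ * A)).posSemidef.1
    rw [h1, (CFC.sqrt_mul_sqrt_self _ hG.nonneg), Matrix.conjTranspose_eq_transpose_of_trivial,
      trace_transpose_mul_self]
  -- rank A equals the number of nonzero singular values
  have hSt : Sᵀ = S := by
    have := (CFC.sqrt_nonneg (Aᴴ * A)).posSemidef.1
    rwa [Matrix.IsHermitian, Matrix.conjTranspose_eq_transpose_of_trivial] at this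
  have hrankS : S.rank = A.rank := by
    have h1 : S.rank = (Sᵀ * S).rank := (Matrix.rank_transpose_mul_self S).symm
    rw [h1, hSt, (CFC.sqrt_mul_sqrt_self _ hG.nonneg), Matrix.rank_conjTranspose_mul_self]
  have hcard : Fintype.card {i // lam i ≠ 0} = A.rank := by
    rw [← hrankS, (CFC.sqrt_nonneg (Aᴴ * A)).posSemidef.1.rank_eq_card_non_zero_eigs]
    rfl
  set s : Finset (Fin m₂) := Finset.univ.filter (fun i => lam i ≠ 0) with hsdef
  have hscard : (s.card : ℝ) = (A.rank : ℝ) := by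
    rw [← hcard, Fintype.card_subtype]
  have hsum_eq : ∑ i, lam i = ∑ i ∈ s, lam i := by
    rw [hsdef]
    exact (Finset.sum_filter_ne_zero Finset.univ).symm
  have hCS : (∑ i ∈ s, lam i) ^ 2 ≤ (A.rank : ℝ) * ∑ i, lam i ^ 2 := by
    have h := Finset.sum_mul_sq_le_sq_mul_sq s (fun _ => (1 : ℝ)) lam
    simp only [one_mul, one_pow] at h
    calc (∑ i ∈ s, lam i) ^ 2 ≤ (∑ _i ∈ s, (1 : ℝ)) * ∑ i ∈ s, lam i ^ 2 := h
      _ = (s.card : ℝ) * ∑ i ∈ s, lam i ^ 2 := by simp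
      _ ≤ (A.rank : ℝ) * ∑ i, lam i ^ 2 := by
          rw [hscard]
          apply mul_le_mul_of_nonneg_left _ (Nat.cast_nonneg _)
          exact Finset.sum_le_sum_of_subset_of_nonneg (Finset.subset_univ s)
            (fun i _ _ => sq_nonneg _)
  have hsum_nonneg : 0 ≤ ∑ i, lam i := Finset.sum_nonneg fun i _ => hlam_nonneg i
  have : nuclearNorm A = ∑ i, lam i := rfl
  rw [this, hsum_eq]
  have hs_nonneg : 0 ≤ ∑ i ∈ s, lam i := by rw [← hsum_eq]; exact hsum_nonneg
  calc ∑ i ∈ s, lam i = Real.sqrt ((∑ i ∈ s, lam i) ^ 2) := (Real.sqrt_sq hs_nonneg).symm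
    _ ≤ Real.sqrt ((A.rank : ℝ) * ∑ i, lam i ^ 2) := Real.sqrt_le_sqrt hCS
    _ = Real.sqrt (A.rank : ℝ) * Real.sqrt (∑ i, lam i ^ 2) := Real.sqrt_mul (Nat.cast_nonneg _) _
    _ = Real.sqrt A.rank * frobNorm A := by rw [hlam_sq]; rfl

/-- Subadditivity of matrix rank. -/
lemma matrix_rank_add_le {m n : ℕ} (A B : Matrix (Fin m) (Fin n) ℝ) :
    (A + B).rank ≤ A.rank + B.rank := by
  rw [Matrix.rank, Matrix.rank, Matrix.rank, Matrix.mulVecLin_add]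
  have hle : LinearMap.range (A.mulVecLin + B.mulVecLin) ≤
      LinearMap.range A.mulVecLin ⊔ LinearMap.range B.mulVecLin := by
    rintro x ⟨y, rfl⟩
    exact Submodule.mem_sup.2 ⟨A.mulVecLin y, ⟨y, rfl⟩, B.mulVecLin y, ⟨y, rfl⟩, rfl⟩
  exact le_trans (Submodule.finrank_mono hle)
    (Submodule.finrank_add_le_finrank_add_finrank _ _)

/-- Contraction property of the Frobenius norm for projections. -/
lemma frobNorm_sub_proj_le {m₁ m₂ : ℕ} (Q : Matrix (Fin m₁) (Fin m₁) ℝ)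
    (R : Matrix (Fin m₂) (Fin m₂) ℝ) (hQt : Qᵀ = Q) (hQ2 : Q * Q = Q)
    (hRt : Rᵀ = R) (hR2 : R * R = R) (B : Matrix (Fin m₁) (Fin m₂) ℝ) :
    frobNorm (B - Q * B * R) ≤ frobNorm B := by
  set C := Q * B * R with hCdef
  have hQcancel : ∀ X : Matrix (Fin m₁) (Fin m₂) ℝ, Q * (Q * X) = Q * X := by
    intro X; rw [← Matrix.mul_assoc, hQ2]
  have hCt : Cᵀ = R * (Bᵀ * Q) := by
    rw [hCdef, Matrix.transpose_mul, Matrix.transpose_mul, hQt, hRt]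
  have h1 : (Bᵀ * C).trace = (Cᵀ * C).trace := by
    have e1 : Cᵀ * C = R * ((Bᵀ * Q) * C) := by rw [hCt]; exact Matrix.mul_assoc _ _ _
    have e2 : ((Bᵀ * Q) * C) * R = Bᵀ * C := by
      simp only [hCdef, Matrix.mul_assoc, hQcancel, hR2]
    rw [e1, Matrix.trace_mul_comm R, e2]
  have h2 : (Cᵀ * B).trace = (Bᵀ * C).trace := by
    rw [← Matrix.trace_transpose (Cᵀ * B), Matrix.transpose_mul, Matrix.transpose_transpose]
  have hkey : ((B - C)ᵀ * (B - C)).trace = (Bᵀ * B).trace - (Cᵀ * C).trace := by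
    rw [Matrix.transpose_sub, Matrix.sub_mul, Matrix.mul_sub, Matrix.mul_sub,
      Matrix.trace_sub, Matrix.trace_sub, Matrix.trace_sub]
    rw [h2, h1]
    ring
  rw [frobNorm_eq_sqrt_trace, frobNorm_eq_sqrt_trace]
  apply Real.sqrt_le_sqrt
  rw [hkey]
  have := trace_transpose_mul_self_nonneg C
  linarith

/-- For A = U_A D_A V_Aᵀ with orthonormal singular-vector factors, the projection
P_A(B) = B − (1 − U_A U_Aᵀ) B (1 − V_A V_Aᵀ) satisfies rank(P_A(B)) ≤ 2 rank(A) and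
‖P_A(B)‖_* ≤ √(2 rank A)·‖P_A(B)‖_F ≤ √(2 rank A)·‖B‖_F. -/
theorem proj_rank_and_nuclear_bound {m₁ m₂ r₁ : ℕ}
    (UA : Matrix (Fin m₁) (Fin r₁) ℝ) (VA : Matrix (Fin m₂) (Fin r₁) ℝ)
    (dA : Fin r₁ → ℝ) (hdA : ∀ i, 0 < dA i)
    (hUA : UAᵀ * UA = 1) (hVA : VAᵀ * VA = 1)
    (B : Matrix (Fin m₁) (Fin m₂) ℝ) :
    (B - (1 - UA * UAᵀ) * B * (1 - VA * VAᵀ)).rank ≤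
        2 * (UA * Matrix.diagonal dA * VAᵀ).rank ∧
      nuclearNorm (B - (1 - UA * UAᵀ) * B * (1 - VA * VAᵀ)) ≤
        Real.sqrt (2 * (UA * Matrix.diagonal dA * VAᵀ).rank) *
          frobNorm (B - (1 - UA * UAᵀ) * B * (1 - VA * VAᵀ)) ∧
      Real.sqrt (2 * (UA * Matrix.diagonal dA * VAᵀ).rank) *
          frobNorm (B - (1 - UA * UAᵀ) * B * (1 - VA * VAᵀ)) ≤
        Real.sqrt (2 * (UA * Matrix.diagonal dA * VAᵀ).rank) * frobNorm B := by
  classical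
  set A := UA * Matrix.diagonal dA * VAᵀ with hAdef
  set M := B - (1 - UA * UAᵀ) * B * (1 - VA * VAᵀ) with hMdef
  -- rank A ≥ r₁
  have hdiag : UAᵀ * A * VA = Matrix.diagonal dA := by
    rw [hAdef, Matrix.mul_assoc UA, ← Matrix.mul_assoc UAᵀ UA, hUA, Matrix.one_mul,
      Matrix.mul_assoc, hVA, Matrix.mul_one]
  have hrank_diag : (Matrix.diagonal dA).rank = r₁ := by
    rw [Matrix.rank_diagonal]
    have h : ∀ i, dA i ≠ 0 := fun i => (hdA i).ne'
    rw [Fintype.card_congr (Equiv.subtypeUnivEquiv h), Fintype.card_fin]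
  have hrankA : r₁ ≤ A.rank := by
    rw [← hrank_diag, ← hdiag]
    exact le_trans (Matrix.rank_mul_le_left _ VA) (Matrix.rank_mul_le_right UAᵀ A)
  -- decomposition of M
  have hdecomp : M = UA * (UAᵀ * B) + ((1 - UA * UAᵀ) * B * VA) * VAᵀ := by
    rw [hMdef]
    simp only [Matrix.sub_mul, Matrix.mul_sub, Matrix.one_mul, Matrix.mul_one, Matrix.mul_assoc]
    abel
  have hrankM : M.rank ≤ 2 * A.rank := by
    calc M.rank ≤ (UA * (UAᵀ * B)).rank + (((1 - UA * UAᵀ) * B * VA) * VAᵀ).rank := by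
          rw [hdecomp]; exact matrix_rank_add_le _ _
      _ ≤ r₁ + r₁ := by
          apply add_le_add
          · exact le_trans (Matrix.rank_mul_le_left UA _)
              (le_trans UA.rank_le_card_width (Fintype.card_fin r₁).le)
          · exact le_trans (Matrix.rank_mul_le_right _ VAᵀ)
              (le_trans VAᵀ.rank_le_card_height (Fintype.card_fin r₁).le)
      _ = 2 * r₁ := by ring
      _ ≤ 2 * A.rank := by omega
  refine ⟨hrankM, ?_, ?_⟩
  · -- nuclear norm bound
    calc nuclearNorm M ≤ Real.sqrt M.rank * frobNorm M :=
          nuclearNorm_le_sqrt_rank_mul_frobNorm M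
      _ ≤ Real.sqrt (2 * A.rank) * frobNorm M := by
          apply mul_le_mul_of_nonneg_right _ (Real.sqrt_nonneg _)
          apply Real.sqrt_le_sqrt
          exact_mod_cast hrankM
      _ = Real.sqrt (2 * (A.rank : ℝ)) * frobNorm M := by norm_cast
  · -- Frobenius contraction
    apply mul_le_mul_of_nonneg_left _ (Real.sqrt_nonneg _)
    have hQt : (1 - UA * UAᵀ)ᵀ = 1 - UA * UAᵀ := by
      rw [Matrix.transpose_sub, Matrix.transpose_one, Matrix.transpose_mul,
        Matrix.transpose_transpose]
    have hQ2 : (1 - UA * UAᵀ) * (1 - UA * UAᵀ) = 1 - UA * UAᵀ := by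
      have : UA * UAᵀ * (UA * UAᵀ) = UA * UAᵀ := by
        rw [Matrix.mul_assoc, ← Matrix.mul_assoc UAᵀ UA, hUA, Matrix.one_mul]
      rw [Matrix.mul_sub, Matrix.mul_one, Matrix.sub_mul, Matrix.one_mul, this]
      abel
    have hRt : (1 - VA * VAᵀ)ᵀ = 1 - VA * VAᵀ := by
      rw [Matrix.transpose_sub, Matrix.transpose_one, Matrix.transpose_mul,
        Matrix.transpose_transpose]
    have hR2 : (1 - VA * VAᵀ) * (1 - VA * VAᵀ) = 1 - VA * VAᵀ := by
      have : VA * VAᵀ * (VA * VAᵀ) = VA * VAᵀ := by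
        rw [Matrix.mul_assoc, ← Matrix.mul_assoc VAᵀ VA, hVA, Matrix.one_mul]
      rw [Matrix.mul_sub, Matrix.mul_one, Matrix.sub_mul, Matrix.one_mul, this]
      abel
    exact frobNorm_sub_proj_le _ _ hQt hQ2 hRt hR2 B
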